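/- Let O be an ALCHI^abs[cr]-ontology in normal form whose level graph is a tree, and let I be a model of O. For every level L of O and every set V ⊆ Δ^{I_L} with |V| ≤ ||O||, the restriction M_V = (L, I_L|_V) of I_L to V (intersecting the extensions of all concept and role names of O with V) is a mosaic, and M_V belongs to every set M_i of the mosaic-elimination sequence; in particular M_V ∈ M*. -/

import Mathlib

set_option maxHeartbeats 1000000

namespace DLAbs

/-! # Basic syntax of description logics with abstraction and refinement

Concept names, role names, variables and abstraction levels are represented
by natural numbers. -/

/-- A role: a role name or an inverse role. -/
inductive Role where
  | name (r : ℕ)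
  | inv  (r : ℕ)
deriving DecidableEq

/-- `R⁻`, with `(r⁻)⁻ = r`. -/
def Role.flip : Role → Role
  | .name r => .inv r
  | .inv r  => .name r

/-- The underlying role name of a role. -/
def Role.base : Role → ℕ
  | .name r => r
  | .inv r  => r

/-- A role is a plain role name (no inverse). -/
def Role.IsName : Role → Prop
  | .name _ => True
  | .inv _  => False

/-- ALCI-concepts. -/
inductive Concept where
  | atom (A : ℕ)
  | neg  (C : Concept)
  | conj (C D : Concept)
  | disj (C D : Concept)
  | ex   (R : Role) (C : Concept)
  | all  (R : Role) (C : Concept)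
deriving DecidableEq

/-- `⊤` is an abbreviation for `A ⊔ ¬A` with `A` a fixed concept name. -/
def Concept.top : Concept := .disj (.atom 0) (.neg (.atom 0))

/-- `⊥` is an abbreviation for `¬⊤`. -/
def Concept.bot : Concept := .neg Concept.top

/-- ALC-concepts: no inverse roles. -/
def Concept.IsALC : Concept → Prop
  | .atom _ => True
  | .neg C => C.IsALC
  | .conj C D => C.IsALC ∧ D.IsALC
  | .disj C D => C.IsALC ∧ D.IsALC
  | .ex R C => R.IsName ∧ C.IsALC
  | .all R C => R.IsName ∧ C.IsALC

/-- EL-concepts: only concept names, `⊓` and `∃r.C` (no inverse roles). -/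
def Concept.IsEL : Concept → Prop
  | .atom _ => True
  | .neg _ => False
  | .conj C D => C.IsEL ∧ D.IsEL
  | .disj _ _ => False
  | .ex R C => R.IsName ∧ C.IsEL
  | .all _ _ => False

/-- Concept names occurring in a concept. -/
def Concept.cnames : Concept → List ℕ
  | .atom A => [A]
  | .neg C => C.cnames
  | .conj C D => C.cnames ++ D.cnames
  | .disj C D => C.cnames ++ D.cnames
  | .ex _ C => C.cnames
  | .all _ C => C.cnames

/-- Role names occurring in a concept. -/
def Concept.rnames : Concept → List ℕ
  | .atom _ => []
  | .neg C => C.rnames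
  | .conj C D => C.rnames ++ D.rnames
  | .disj C D => C.rnames ++ D.rnames
  | .ex R C => R.base :: C.rnames
  | .all R C => R.base :: C.rnames

/-- Size of a concept. -/
def Concept.size : Concept → ℕ
  | .atom _ => 1
  | .neg C => C.size + 1
  | .conj C D => C.size + D.size + 1
  | .disj C D => C.size + D.size + 1
  | .ex _ C => C.size + 2
  | .all _ C => C.size + 2

/-- An interpretation with domain contained in the carrier type `α`.
(Nonemptiness of the domain is required separately where appropriate.) -/
structure Interp (α : Type) where
  dom : Set α
  cname : ℕ → Set α
  rname : ℕ → Set (α × α)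
  cname_sub : ∀ A, cname A ⊆ dom
  rname_sub : ∀ r p, p ∈ rname r → p.1 ∈ dom ∧ p.2 ∈ dom

/-- Interpretation of a (possibly inverse) role. -/
def Interp.role {α} (I : Interp α) : Role → Set (α × α)
  | .name r => I.rname r
  | .inv r  => {p | (p.2, p.1) ∈ I.rname r}

/-- Semantics of concepts. -/
def Interp.sem {α} (I : Interp α) : Concept → Set α
  | .atom A => I.cname A
  | .neg C => I.dom \ I.sem C
  | .conj C D => I.sem C ∩ I.sem D
  | .disj C D => I.sem C ∪ I.sem D
  | .ex R C => {d | d ∈ I.dom ∧ ∃ e, (d, e) ∈ I.role R ∧ e ∈ I.sem C}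
  | .all R C => {d | d ∈ I.dom ∧ ∀ e, (d, e) ∈ I.role R → e ∈ I.sem C}

/-- A conjunctive query: concept atoms `C(x)`, role atoms `r(x,y)` (`r` a role
name), and a tuple of answer variables.  Variables not occurring in `ans` are
existentially quantified. -/
structure CQ where
  cas : List (Concept × ℕ)
  ras : List (ℕ × ℕ × ℕ)
  ans : List ℕ
deriving DecidableEq

/-- The variables occurring in atoms of a CQ. -/
def CQ.atomVars (q : CQ) : List ℕ :=
  q.cas.map Prod.snd ++ q.ras.flatMap (fun p => [p.2.1, p.2.2])

/-- All variables of a CQ. -/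
def CQ.vars (q : CQ) : List ℕ := q.ans ++ q.atomVars

/-- A CQ is full if it has no quantified variables. -/
def CQ.Full (q : CQ) : Prop := (∀ v ∈ q.atomVars, v ∈ q.ans) ∧ q.ans.Nodup

/-- The undirected edge relation on variables induced by the role atoms. -/
def CQ.edge (q : CQ) (a b : ℕ) : Prop :=
  ∃ p ∈ q.ras, (p.2.1 = a ∧ p.2.2 = b) ∨ (p.2.1 = b ∧ p.2.2 = a)

/-- A CQ is connected. -/
def CQ.Connected (q : CQ) : Prop :=
  ∀ u ∈ q.vars, ∀ v ∈ q.vars, Relation.ReflTransGen q.edge u v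

/-- `h` is a homomorphism from `q` to `I`. -/
def CQ.Hom {α} (q : CQ) (I : Interp α) (h : ℕ → α) : Prop :=
  (∀ v ∈ q.vars, h v ∈ I.dom) ∧
  (∀ p ∈ q.cas, h p.2 ∈ I.sem p.1) ∧
  (∀ p ∈ q.ras, (h p.2.1, h p.2.2) ∈ I.rname p.1)

/-- The answers `q(I)` to `q` on `I`, as tuples (lists) indexed by `q.ans`. -/
def CQ.answers {α} (q : CQ) (I : Interp α) : Set (List α) :=
  {t | ∃ h, q.Hom I h ∧ t = q.ans.map h}

def CQ.cnames (q : CQ) : List ℕ := q.cas.flatMap (fun p => p.1.cnames)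

def CQ.rnames (q : CQ) : List ℕ :=
  q.cas.flatMap (fun p => p.1.rnames) ++ q.ras.map (fun p => p.1)

def CQ.size (q : CQ) : ℕ :=
  (q.cas.map (fun p => p.1.size + 1)).sum + 3 * q.ras.length + q.ans.length + 1

/-- Statements of abstraction DLs.
* `ci L C D`: the labeled concept inclusion `C ⊑_L D`;
* `ri L R S`: the labeled role inclusion `R ⊑_L S`;
* `cref L q L' C`: the concept refinement `L:q(x̄) refines L':C`;
* `cabs L' C L q`: the concept abstraction `L':C abstracts L:q(x̄)`;
* `rref L q nx L' C1 R C2`: the role refinement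
  `L:q(x̄,ȳ) refines L':(C1(x) ∧ R(x,y) ∧ C2(y))`, where `x̄` consists of the
  first `nx` answer variables of `q` and `ȳ` of the remaining ones;
* `rabs L' R L q nx`: the role abstraction `L':R abstracts L:q(x̄,ȳ)`, with the
  same convention for the split of the answer variables. -/
inductive Stmt where
  | ci   (L : ℕ) (C D : Concept)
  | ri   (L : ℕ) (R S : Role)
  | cref (L : ℕ) (q : CQ) (L' : ℕ) (C : Concept)
  | cabs (L' : ℕ) (C : Concept) (L : ℕ) (q : CQ)
  | rref (L : ℕ) (q : CQ) (nx : ℕ) (L' : ℕ) (C1 : Concept) (R : Role) (C2 : Concept)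
  | rabs (L' : ℕ) (R : Role) (L : ℕ) (q : CQ) (nx : ℕ)
deriving DecidableEq

/-- Syntactic side conditions on the CQs in a statement: CQs in refinement and
abstraction statements are full, CQs in abstraction statements are moreover
connected, and in role refinements/abstractions both tuples are nonempty. -/
def Stmt.WfCQ : Stmt → Prop
  | .ci _ _ _ => True
  | .ri _ _ _ => True
  | .cref _ q _ _ => q.Full
  | .cabs _ _ _ q => q.Full ∧ q.Connected
  | .rref _ q nx _ _ _ _ => q.Full ∧ 0 < nx ∧ nx < q.ans.length
  | .rabs _ _ _ q nx => q.Full ∧ q.Connected ∧ 0 < nx ∧ nx < q.ans.length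

def Stmt.lvls : Stmt → List ℕ
  | .ci L _ _ => [L]
  | .ri L _ _ => [L]
  | .cref L _ L' _ => [L, L']
  | .cabs L' _ L _ => [L, L']
  | .rref L _ _ L' _ _ _ => [L, L']
  | .rabs L' _ L _ _ => [L, L']

def Stmt.cnames : Stmt → List ℕ
  | .ci _ C D => C.cnames ++ D.cnames
  | .ri _ _ _ => []
  | .cref _ q _ C => q.cnames ++ C.cnames
  | .cabs _ C _ q => q.cnames ++ C.cnames
  | .rref _ q _ _ C1 _ C2 => q.cnames ++ C1.cnames ++ C2.cnames
  | .rabs _ _ _ q _ => q.cnames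

def Stmt.rnames : Stmt → List ℕ
  | .ci _ C D => C.rnames ++ D.rnames
  | .ri _ R S => [R.base, S.base]
  | .cref _ q _ C => q.rnames ++ C.rnames
  | .cabs _ C _ q => q.rnames ++ C.rnames
  | .rref _ q _ _ C1 R C2 => q.rnames ++ C1.rnames ++ C2.rnames ++ [R.base]
  | .rabs _ R _ q _ => q.rnames ++ [R.base]

def Stmt.size : Stmt → ℕ
  | .ci _ C D => C.size + D.size + 2
  | .ri _ _ _ => 4
  | .cref _ q _ C => q.size + C.size + 2
  | .cabs _ C _ q => q.size + C.size + 2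
  | .rref _ q _ _ C1 _ C2 => q.size + C1.size + C2.size + 6
  | .rabs _ _ _ q _ => q.size + 6

/-- The abstraction levels occurring in an ontology. -/
def ontLvls (O : List Stmt) : List ℕ := O.flatMap Stmt.lvls

/-- The concept names occurring in an ontology. -/
def ontCnames (O : List Stmt) : List ℕ := O.flatMap Stmt.cnames

/-- The role names occurring in an ontology. -/
def ontRnames (O : List Stmt) : List ℕ := O.flatMap Stmt.rnames

/-- The size `‖O‖` of an ontology. -/
def ontSize (O : List Stmt) : ℕ := (O.map Stmt.size).sum + 1

/-- An A-interpretation: a set of abstraction levels, a relation `≺` on them,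
one interpretation per level, and a partial refinement function `ρ`.  The
structural requirements are collected in `AInterp.Wf`, `AInterp.IsValid` and
`AInterp.IsValidDAG` below. -/
structure AInterp (α : Type) where
  levels : Set ℕ
  prec : ℕ → ℕ → Prop
  interp : ℕ → Interp α
  rho : α → ℕ → Option (List α)

/-- The directed graph `(V, E)` is a tree. -/
def IsTreeGraph (V : Set ℕ) (E : ℕ → ℕ → Prop) : Prop :=
  ∃ root ∈ V, (∀ u, ¬ E u root) ∧
    (∀ v ∈ V, v ≠ root → ∃! u, u ∈ V ∧ E u v) ∧
    (∀ v ∈ V, Relation.ReflTransGen (fun a b => a ∈ V ∧ b ∈ V ∧ E a b) root v)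

/-- The directed graph `(V, E)` is a DAG. -/
def IsDAGGraph (V : Set ℕ) (E : ℕ → ℕ → Prop) : Prop :=
  (∀ a b, E a b → a ∈ V ∧ b ∈ V) ∧ (∀ v, ¬ Relation.TransGen E v v)

/-- Structural conditions on A-interpretations (without the condition on the
shape of the level graph): levels carry nonempty pairwise disjoint domains,
`≺` relates only levels of the interpretation, and the refinement function
assigns to `(d, L)` with `L ≺ L(d)` nonempty tuples over `Δ^{I_L}` such that
every element participates in at most one ensemble of its own level. -/
def AInterp.Wf {α} (I : AInterp α) : Prop :=
  (∀ L ∈ I.levels, (I.interp L).dom.Nonempty) ∧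
  (∀ L, L ∉ I.levels → (I.interp L).dom = ∅) ∧
  (∀ L L', L ≠ L' → ∀ d, d ∈ (I.interp L).dom → d ∉ (I.interp L').dom) ∧
  (∀ L L', I.prec L L' → L ∈ I.levels ∧ L' ∈ I.levels) ∧
  (∀ d L t, I.rho d L = some t →
      t ≠ [] ∧ (∀ e ∈ t, e ∈ (I.interp L).dom) ∧
      ∃ L', d ∈ (I.interp L').dom ∧ I.prec L L') ∧
  (∀ L d d' t t', I.rho d L = some t → I.rho d' L = some t' →
      ∀ e, e ∈ t → e ∈ t' → d = d')

/-- A valid A-interpretation: the level graph `(A_I, {(L',L) | L ≺ L'})` is a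
tree. -/
def AInterp.IsValid {α} (I : AInterp α) : Prop :=
  I.Wf ∧ IsTreeGraph I.levels (fun a b => I.prec b a)

/-- A-interpretations under the DAG semantics: the level graph is only
required to be a directed acyclic graph. -/
def AInterp.IsValidDAG {α} (I : AInterp α) : Prop :=
  I.Wf ∧ IsDAGGraph I.levels (fun a b => I.prec b a)

/-- The repetition-free semantics: every ensemble is a repetition-free
tuple. -/
def AInterp.RepFree {α} (I : AInterp α) : Prop :=
  ∀ d L t, I.rho d L = some t → t.Nodup

/-- Satisfaction of statements in an A-interpretation. -/
def AInterp.sat {α} (I : AInterp α) : Stmt → Prop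
  | .ci L C D => L ∈ I.levels ∧ (I.interp L).sem C ⊆ (I.interp L).sem D
  | .ri L R S => L ∈ I.levels ∧ (I.interp L).role R ⊆ (I.interp L).role S
  | .cref L q L' C => I.prec L L' ∧
      ∀ d ∈ (I.interp L').sem C, ∃ t ∈ q.answers (I.interp L), I.rho d L = some t
  | .cabs L' C L q => I.prec L L' ∧
      ∀ t ∈ q.answers (I.interp L), ∃ d ∈ (I.interp L').sem C, I.rho d L = some t
  | .rref L q nx L' C1 R C2 => I.prec L L' ∧
      ∀ d1 d2, d1 ∈ (I.interp L').sem C1 → d2 ∈ (I.interp L').sem C2 →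
        (d1, d2) ∈ (I.interp L').role R →
        ∃ h, q.Hom (I.interp L) h ∧
          I.rho d1 L = some ((q.ans.take nx).map h) ∧
          I.rho d2 L = some ((q.ans.drop nx).map h)
  | .rabs L' R L q nx => I.prec L L' ∧
      ∀ h, q.Hom (I.interp L) h →
        ∃ d1 d2, (d1, d2) ∈ (I.interp L').role R ∧
          I.rho d1 L = some ((q.ans.take nx).map h) ∧
          I.rho d2 L = some ((q.ans.drop nx).map h)

/-- `C` is `L`-satisfiable w.r.t. the ontology `O` (given as a set of
statements). -/
def SatSet (O : Set Stmt) (C : Concept) (L : ℕ) : Prop :=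
  ∃ (α : Type) (I : AInterp α), I.IsValid ∧ (∀ s ∈ O, I.sat s) ∧
    ((I.interp L).sem C).Nonempty

/-- `L`-satisfiability under the repetition-free semantics. -/
def SatSetRF (O : Set Stmt) (C : Concept) (L : ℕ) : Prop :=
  ∃ (α : Type) (I : AInterp α), I.IsValid ∧ I.RepFree ∧ (∀ s ∈ O, I.sat s) ∧
    ((I.interp L).sem C).Nonempty

/-- `L`-satisfiability under the DAG semantics. -/
def SatSetDAG (O : Set Stmt) (C : Concept) (L : ℕ) : Prop :=
  ∃ (α : Type) (I : AInterp α), I.IsValidDAG ∧ (∀ s ∈ O, I.sat s) ∧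
    ((I.interp L).sem C).Nonempty

def SatList (O : List Stmt) (C : Concept) (L : ℕ) : Prop :=
  SatSet {s | s ∈ O} C L

def SatListRF (O : List Stmt) (C : Concept) (L : ℕ) : Prop :=
  SatSetRF {s | s ∈ O} C L

def SatListDAG (O : List Stmt) (C : Concept) (L : ℕ) : Prop :=
  SatSetDAG {s | s ∈ O} C L

/-! ## Ordinary (one-level) ontologies -/

/-- An ordinary ontology is a finite list of concept inclusions `C ⊑ D`. -/
def Interp.IsPlainModel {α} (I : Interp α) (O : List (Concept × Concept)) : Prop :=
  I.dom.Nonempty ∧ ∀ p ∈ O, I.sem p.1 ⊆ I.sem p.2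

/-- `O, A ⊨ q`: every model of `O` in which the concept name `A` is nonempty
satisfies the Boolean CQ `q`. -/
def EntailsCQ (O : List (Concept × Concept)) (A : ℕ) (q : CQ) : Prop :=
  ∀ (α : Type) (I : Interp α), I.IsPlainModel O → (I.cname A).Nonempty →
    ∃ h, q.Hom I h

def plainCnames (O : List (Concept × Concept)) : List ℕ :=
  O.flatMap (fun p => p.1.cnames ++ p.2.cnames)

def plainRnames (O : List (Concept × Concept)) : List ℕ :=
  O.flatMap (fun p => p.1.rnames ++ p.2.rnames)

def bigConj (l : List Concept) : Concept := l.foldr Concept.conj Concept.top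

def bigDisj (l : List Concept) : Concept := l.foldr Concept.disj Concept.bot

/-! ## Mosaics for `ALCHI^abs[cr]` -/

/-- The six normal forms of concept inclusions. -/
def NormalCI (C D : Concept) : Prop :=
  (∃ A, C = Concept.top ∧ D = Concept.atom A) ∨
  (∃ A₁ A₂ A, C = Concept.conj (Concept.atom A₁) (Concept.atom A₂) ∧
      D = Concept.atom A) ∨
  (∃ A R B, C = Concept.atom A ∧ D = Concept.ex R (Concept.atom B)) ∨
  (∃ R B A, C = Concept.ex R (Concept.atom B) ∧ D = Concept.atom A) ∨
  (∃ A B, C = Concept.atom A ∧ D = Concept.neg (Concept.atom B)) ∨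
  (∃ B A, C = Concept.neg (Concept.atom B) ∧ D = Concept.atom A)

/-- `O` is an `ALCHI^abs[cr]`-ontology in normal form: it consists of concept
inclusions in one of the six normal forms, role inclusions, and concept
refinements whose concepts are concept names and whose CQs are full and use
only concept names in concept atoms; moreover `O` contains `R ⊑_L R` for all
roles `R` and levels `L` occurring in `O` and is closed under transitivity and
inverses of role inclusions. -/
def CRNormalForm (O : List Stmt) : Prop :=
  (∀ s ∈ O, match s with
    | .ci _ C D => NormalCI C D
    | .ri _ _ _ => True
    | .cref _ q _ C => q.Full ∧ (∃ A, C = Concept.atom A) ∧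
        (∀ p ∈ q.cas, ∃ B, p.1 = Concept.atom B)
    | _ => False) ∧
  (∀ L ∈ ontLvls O, ∀ rn ∈ ontRnames O,
      Stmt.ri L (Role.name rn) (Role.name rn) ∈ O ∧
      Stmt.ri L (Role.inv rn) (Role.inv rn) ∈ O) ∧
  (∀ L R S T, Stmt.ri L R S ∈ O → Stmt.ri L S T ∈ O → Stmt.ri L R T ∈ O) ∧
  (∀ L R S, Stmt.ri L R S ∈ O → Stmt.ri L R.flip S.flip ∈ O)

/-- `L ≺ L'`: the smallest relation containing `L ≺ L'` for every concept
refinement `L:q refines L':C` in `O`. -/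
def precCR (O : List Stmt) (L L' : ℕ) : Prop :=
  ∃ q C, Stmt.cref L q L' C ∈ O

/-- A mosaic candidate for `ALCHI^abs[cr]`: an abstraction level together with
an interpretation over the fixed domain `Δ` of cardinality `‖O‖`. -/
structure MosaicCR (O : List Stmt) where
  lvl : ℕ
  I : Interp (Fin (ontSize O))

/-- `M` is a mosaic: its level occurs in `O`, its domain is nonempty, it only
interprets symbols of `O`, and it satisfies all concept inclusions
`C ⊑_{L^M} D` in `O` with the possible exception of those of the form
`A ⊑_{L^M} ∃R.B`, as well as all role inclusions `R ⊑_{L^M} S` in `O`. -/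
def IsMosaicCR (O : List Stmt) (M : MosaicCR O) : Prop :=
  M.lvl ∈ ontLvls O ∧ M.I.dom.Nonempty ∧
  (∀ A, A ∉ ontCnames O → M.I.cname A = ∅) ∧
  (∀ rn, rn ∉ ontRnames O → M.I.rname rn = ∅) ∧
  (∀ C D, Stmt.ci M.lvl C D ∈ O →
    (¬ ∃ A R B, C = Concept.atom A ∧ D = Concept.ex R (Concept.atom B)) →
    M.I.sem C ⊆ M.I.sem D) ∧
  (∀ R S, Stmt.ri M.lvl R S ∈ O → M.I.role R ⊆ M.I.role S)

/-- `M` is good in the set `Ms` of mosaics. -/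
def GoodCR (O : List Stmt) (Ms : Set (MosaicCR O)) (M : MosaicCR O) : Prop :=
  ∀ d ∈ M.I.dom,
    (∀ A R B, Stmt.ci M.lvl (Concept.atom A) (Concept.ex R (Concept.atom B)) ∈ O →
      d ∈ M.I.cname A → d ∉ M.I.sem (Concept.ex R (Concept.atom B)) →
      ∃ M' ∈ Ms, M'.lvl = M.lvl ∧ ∃ d' ∈ M'.I.dom,
        d' ∈ M'.I.cname B ∧
        (∀ S A' B',
          Stmt.ci M.lvl (Concept.ex S (Concept.atom A')) (Concept.atom B') ∈ O →
          Stmt.ri M.lvl R S ∈ O → d' ∈ M'.I.cname A' → d ∈ M.I.cname B') ∧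
        (∀ S A' B',
          Stmt.ci M.lvl (Concept.ex S (Concept.atom A')) (Concept.atom B') ∈ O →
          Stmt.ri M.lvl R.flip S ∈ O → d ∈ M.I.cname A' → d' ∈ M'.I.cname B')) ∧
    (∀ L', (∃ q A, Stmt.cref L' q M.lvl (Concept.atom A) ∈ O ∧ d ∈ M.I.cname A) →
      ∃ M' ∈ Ms, M'.lvl = L' ∧ ∃ t : List (Fin (ontSize O)),
        ∀ q A, Stmt.cref L' q M.lvl (Concept.atom A) ∈ O → d ∈ M.I.cname A →
          t ∈ q.answers M'.I)

/-- The mosaic-elimination sequence: start with the set of all mosaics and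
repeatedly eliminate all mosaics that are not good. -/
def MsetCR (O : List Stmt) : ℕ → Set (MosaicCR O)
  | 0 => {M | IsMosaicCR O M}
  | n + 1 => {M | M ∈ MsetCR O n ∧ GoodCR O (MsetCR O n) M}

/-- The final set `M*` at which the elimination stabilizes. -/
def MstarCR (O : List Stmt) : Set (MosaicCR O) := ⋂ n, MsetCR O n

/-! ## Auxiliary machinery for the restriction mosaic -/

section RestrictionAux

variable {α : Type}

/-- The restriction of an interpretation `J` to a finite set `V`, renamed into
`Fin (ontSize O)` via `g`, keeping only symbols of `O`. -/
def rstr (O : List Stmt) (J : Interp α) (V : Finset α) (g : α → Fin (ontSize O)) :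
    Interp (Fin (ontSize O)) where
  dom := g '' ↑V
  cname A := if A ∈ ontCnames O then g '' (↑V ∩ J.cname A) else ∅
  rname rn := if rn ∈ ontRnames O then
      (fun p : α × α => (g p.1, g p.2)) '' {p | p.1 ∈ V ∧ p.2 ∈ V ∧ p ∈ J.rname rn}
    else ∅
  cname_sub := by
    intro A x hx
    have hx' : x ∈ (if A ∈ ontCnames O then g '' (↑V ∩ J.cname A) else ∅) := hx
    clear hx; rename' hx' => hx
    split at hx
    · rcases hx with ⟨v, ⟨hv, _⟩, rfl⟩
      exact ⟨v, hv, rfl⟩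
    · exact absurd hx (Set.notMem_empty x)
  rname_sub := by
    intro r p hp
    have hp' : p ∈ (if r ∈ ontRnames O then
        (fun p : α × α => (g p.1, g p.2)) '' {p | p.1 ∈ V ∧ p.2 ∈ V ∧ p ∈ J.rname r}
      else ∅) := hp
    clear hp; rename' hp' => hp
    split at hp
    · rcases hp with ⟨⟨a, b⟩, ⟨ha, hb, _⟩, rfl⟩
      exact ⟨⟨a, ha, rfl⟩, ⟨b, hb, rfl⟩⟩
    · exact absurd hp (Set.notMem_empty p)

variable {O : List Stmt} {J : Interp α} {V : Finset α} {g : α → Fin (ontSize O)}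

lemma rstr_dom_intro {v : α} (hv : v ∈ V) : g v ∈ (rstr O J V g).dom :=
  ⟨v, hv, rfl⟩

lemma rstr_dom_elim {x : Fin (ontSize O)} (hx : x ∈ (rstr O J V g).dom) :
    ∃ v ∈ V, g v = x := by
  rcases hx with ⟨v, hv, rfl⟩
  exact ⟨v, hv, rfl⟩

lemma rstr_cname_intro {v : α} {A : ℕ} (hA : A ∈ ontCnames O) (hv : v ∈ V)
    (h : v ∈ J.cname A) : g v ∈ (rstr O J V g).cname A := by
  show g v ∈ if A ∈ ontCnames O then g '' (↑V ∩ J.cname A) else ∅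
  rw [if_pos hA]
  exact ⟨v, ⟨hv, h⟩, rfl⟩

lemma rstr_cname_elim {x : Fin (ontSize O)} {A : ℕ}
    (hx : x ∈ (rstr O J V g).cname A) :
    A ∈ ontCnames O ∧ ∃ v ∈ V, g v = x ∧ v ∈ J.cname A := by
  have hx' : x ∈ if A ∈ ontCnames O then g '' (↑V ∩ J.cname A) else ∅ := hx
  split at hx'
  · rcases hx' with ⟨v, ⟨hv, hvA⟩, rfl⟩
    exact ⟨by assumption, v, hv, rfl, hvA⟩
  · exact absurd hx' (Set.notMem_empty x)

lemma rstr_cname_elim' (hg : Set.InjOn g ↑V) {v : α} {A : ℕ} (hv : v ∈ V)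
    (hx : g v ∈ (rstr O J V g).cname A) : v ∈ J.cname A := by
  obtain ⟨-, w, hw, hgw, hwA⟩ := rstr_cname_elim hx
  rwa [hg hw hv hgw] at hwA

lemma rstr_rname_intro {v w : α} {rn : ℕ} (hr : rn ∈ ontRnames O) (hv : v ∈ V)
    (hw : w ∈ V) (h : (v, w) ∈ J.rname rn) :
    (g v, g w) ∈ (rstr O J V g).rname rn := by
  show (g v, g w) ∈ if rn ∈ ontRnames O then _ else ∅
  rw [if_pos hr]
  exact ⟨(v, w), ⟨hv, hw, h⟩, rfl⟩

lemma rstr_rname_elim {x y : Fin (ontSize O)} {rn : ℕ}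
    (h : (x, y) ∈ (rstr O J V g).rname rn) :
    ∃ v ∈ V, ∃ w ∈ V, g v = x ∧ g w = y ∧ (v, w) ∈ J.rname rn := by
  have h' : (x, y) ∈ if rn ∈ ontRnames O then
      (fun p : α × α => (g p.1, g p.2)) '' {p | p.1 ∈ V ∧ p.2 ∈ V ∧ p ∈ J.rname rn}
    else ∅ := h
  split at h'
  · rcases h' with ⟨⟨a, b⟩, ⟨ha, hb, hab⟩, heq⟩
    have h1 : g a = x := congrArg Prod.fst heq
    have h2 : g b = y := congrArg Prod.snd heq
    exact ⟨a, ha, b, hb, h1, h2, hab⟩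
  · exact absurd h' (Set.notMem_empty (x, y))

lemma rstr_role_intro {v w : α} {R : Role} (hr : R.base ∈ ontRnames O)
    (hv : v ∈ V) (hw : w ∈ V) (h : (v, w) ∈ J.role R) :
    (g v, g w) ∈ (rstr O J V g).role R := by
  cases R with
  | name r => exact rstr_rname_intro hr hv hw h
  | inv r => exact rstr_rname_intro hr hw hv h

lemma rstr_role_elim {x y : Fin (ontSize O)} {R : Role}
    (h : (x, y) ∈ (rstr O J V g).role R) :
    ∃ v ∈ V, ∃ w ∈ V, g v = x ∧ g w = y ∧ (v, w) ∈ J.role R := by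
  cases R with
  | name r => exact rstr_rname_elim h
  | inv r =>
    obtain ⟨w, hw, v, hv, hgw, hgv, hwv⟩ := rstr_rname_elim (rn := r) h
    exact ⟨v, hv, w, hw, hgv, hgw, hwv⟩

lemma role_flip_mem {J' : Interp α} {R : Role} {x y : α}
    (h : (x, y) ∈ J'.role R) : (y, x) ∈ J'.role R.flip := by
  cases R <;> exact h

lemma mem_ontCnames {s : Stmt} {A : ℕ} (hs : s ∈ O) (hA : A ∈ s.cnames) :
    A ∈ ontCnames O :=
  List.mem_flatMap.mpr ⟨s, hs, hA⟩

lemma mem_ontRnames {s : Stmt} {rn : ℕ} (hs : s ∈ O) (hr : rn ∈ s.rnames) :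
    rn ∈ ontRnames O :=
  List.mem_flatMap.mpr ⟨s, hs, hr⟩

lemma mem_ontLvls {s : Stmt} {L : ℕ} (hs : s ∈ O) (hL : L ∈ s.lvls) :
    L ∈ ontLvls O :=
  List.mem_flatMap.mpr ⟨s, hs, hL⟩

lemma stmt_size_le {s : Stmt} (hs : s ∈ O) : s.size ≤ ontSize O := by
  have : s.size ≤ (O.map Stmt.size).sum :=
    List.single_le_sum (fun x _ => Nat.zero_le x) _ (List.mem_map_of_mem hs)
  exact le_trans this (Nat.le_succ _)

lemma two_le_stmt_size (s : Stmt) : 2 ≤ s.size := by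
  cases s <;> simp only [Stmt.size] <;> omega

lemma two_le_ontSize {s : Stmt} (hs : s ∈ O) : 2 ≤ ontSize O :=
  le_trans (two_le_stmt_size s) (stmt_size_le hs)

lemma ans_length_le {L' L : ℕ} {q : CQ} {C : Concept}
    (h : Stmt.cref L' q L C ∈ O) : q.ans.length ≤ ontSize O := by
  have h1 : q.ans.length ≤ (Stmt.cref L' q L C).size := by
    simp only [Stmt.size, CQ.size]
    omega
  exact le_trans h1 (stmt_size_le h)

lemma exists_injOn_fin (V : Finset α) (n : ℕ) (hn : V.card ≤ n)
    (hne : V.Nonempty) : ∃ g : α → Fin n, Set.InjOn g ↑V := by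
  have h1 : Fintype.card {x // x ∈ V} ≤ Fintype.card (Fin n) := by
    simpa [Fintype.card_coe] using hn
  obtain ⟨f⟩ := Function.Embedding.nonempty_of_card_le h1
  obtain ⟨v₀, hv₀⟩ := hne
  classical
  refine ⟨fun x => if h : x ∈ V then f ⟨x, h⟩ else f ⟨v₀, hv₀⟩, ?_⟩
  intro a ha b hb hab
  simp only [Finset.mem_coe] at ha hb
  simp only [dif_pos ha, dif_pos hb] at hab
  exact congrArg Subtype.val (f.injective hab)

lemma full_vars_mem_ans {q : CQ} (hfull : q.Full) {x : ℕ} (hx : x ∈ q.vars) :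
    x ∈ q.ans := by
  rcases List.mem_append.mp hx with h | h
  · exact h
  · exact hfull.1 x h

/-- The restriction of a model of the `L`-inclusions of `O` is a mosaic. -/
lemma isMosaic_rstr (O : List Stmt) (hnf : CRNormalForm O) {L : ℕ}
    (J : Interp α)
    (hci : ∀ C D, Stmt.ci L C D ∈ O → J.sem C ⊆ J.sem D)
    (hri : ∀ R S, Stmt.ri L R S ∈ O → J.role R ⊆ J.role S)
    (hL : L ∈ ontLvls O) (V : Finset α) (hV : ↑V ⊆ J.dom) (hVne : V.Nonempty)
    (g : α → Fin (ontSize O)) (hg : Set.InjOn g ↑V) :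
    IsMosaicCR O ⟨L, rstr O J V g⟩ := by
  obtain ⟨v₀, hv₀⟩ := hVne
  refine ⟨hL, ⟨g v₀, rstr_dom_intro hv₀⟩, ?_, ?_, ?_, ?_⟩
  · intro A hA
    show (if A ∈ ontCnames O then _ else ∅) = ∅
    rw [if_neg hA]
  · intro rn hrn
    show (if rn ∈ ontRnames O then _ else ∅) = ∅
    rw [if_neg hrn]
  · -- concept inclusions
    intro C D hCD hnotex
    have hN : NormalCI C D := by
      have := hnf.1 _ hCD
      exact this
    rcases hN with ⟨A, rfl, rfl⟩ | ⟨A₁, A₂, A, rfl, rfl⟩ | ⟨A, R, B, rfl, rfl⟩ |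
      ⟨R, B, A, rfl, rfl⟩ | ⟨A, B, rfl, rfl⟩ | ⟨B, A, rfl, rfl⟩
    · -- ⊤ ⊑ A
      intro x hx
      have hxdom : x ∈ (rstr O J V g).dom := by
        rcases hx with hx | hx
        · exact (rstr O J V g).cname_sub 0 hx
        · exact hx.1
      obtain ⟨v, hv, rfl⟩ := rstr_dom_elim hxdom
      have hvtop : v ∈ J.sem Concept.top := by
        by_cases h0 : v ∈ J.cname 0
        · exact Or.inl h0
        · exact Or.inr ⟨hV hv, h0⟩
      have hvA : v ∈ J.cname A := hci _ _ hCD hvtop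
      exact rstr_cname_intro (mem_ontCnames hCD (by
        simp [Stmt.cnames, Concept.cnames, Concept.top])) hv hvA
    · -- A₁ ⊓ A₂ ⊑ A
      intro x hx
      obtain ⟨hx1, hx2⟩ := hx
      obtain ⟨-, v, hv, rfl, hvA1⟩ := rstr_cname_elim hx1
      have hvA2 : v ∈ J.cname A₂ := rstr_cname_elim' hg hv hx2
      have hvA : v ∈ J.cname A := hci _ _ hCD ⟨hvA1, hvA2⟩
      exact rstr_cname_intro (mem_ontCnames hCD (by
        simp [Stmt.cnames, Concept.cnames])) hv hvA
    · -- A ⊑ ∃R.B : excluded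
      exact absurd ⟨A, R, B, rfl, rfl⟩ hnotex
    · -- ∃R.B ⊑ A
      intro x hx
      obtain ⟨hxdom, y, hxy, hyB⟩ := hx
      obtain ⟨v, hv, w, hw, rfl, rfl, hvw⟩ := rstr_role_elim hxy
      have hwB : w ∈ J.cname B := rstr_cname_elim' hg hw hyB
      have hvA : v ∈ J.cname A := hci _ _ hCD ⟨hV hv, w, hvw, hwB⟩
      exact rstr_cname_intro (mem_ontCnames hCD (by
        simp [Stmt.cnames, Concept.cnames])) hv hvA
    · -- A ⊑ ¬B
      intro x hx
      obtain ⟨-, v, hv, rfl, hvA⟩ := rstr_cname_elim hx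
      have hvnB : v ∈ J.sem (Concept.neg (Concept.atom B)) := hci _ _ hCD hvA
      refine ⟨rstr_dom_intro hv, ?_⟩
      intro hxB
      exact hvnB.2 (rstr_cname_elim' hg hv hxB)
    · -- ¬B ⊑ A
      intro x hx
      obtain ⟨hxdom, hxnB⟩ := hx
      obtain ⟨v, hv, rfl⟩ := rstr_dom_elim hxdom
      have hvnB : v ∉ J.cname B := by
        intro hvB
        exact hxnB (rstr_cname_intro (mem_ontCnames hCD (by
          simp [Stmt.cnames, Concept.cnames])) hv hvB)
      have hvA : v ∈ J.cname A := hci _ _ hCD ⟨hV hv, hvnB⟩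
      exact rstr_cname_intro (mem_ontCnames hCD (by
        simp [Stmt.cnames, Concept.cnames])) hv hvA
  · -- role inclusions
    intro R S hRS p hp
    obtain ⟨x, y⟩ := p
    obtain ⟨v, hv, w, hw, rfl, rfl, hvw⟩ := rstr_role_elim hp
    have hvwS : (v, w) ∈ J.role S := hri _ _ hRS hvw
    have hSb : S.base ∈ ontRnames O :=
      mem_ontRnames hRS (by simp [Stmt.rnames])
    exact rstr_role_intro hSb hv hw hvwS

/-- Key lemma: every restriction mosaic survives every elimination round. -/
lemma rstr_mem_Mset (O : List Stmt) (hnf : CRNormalForm O)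
    (I : AInterp α) (hval : I.IsValid) (hmod : ∀ s ∈ O, I.sat s) :
    ∀ i L, L ∈ ontLvls O → ∀ V : Finset α, ↑V ⊆ (I.interp L).dom →
      V.Nonempty → V.card ≤ ontSize O → ∀ g : α → Fin (ontSize O),
      Set.InjOn g ↑V →
      (⟨L, rstr O (I.interp L) V g⟩ : MosaicCR O) ∈ MsetCR O i := by
  intro i
  induction i with
  | zero =>
    intro L hL V hV hVne hVc g hg
    exact isMosaic_rstr O hnf (I.interp L)
      (fun C D h => (hmod _ h).2) (fun R S h => (hmod _ h).2)
      hL V hV hVne g hg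
  | succ i ih =>
    intro L hL V hV hVne hVc g hg
    classical
    refine ⟨ih L hL V hV hVne hVc g hg, ?_⟩
    intro d hd
    obtain ⟨v, hv, rfl⟩ := rstr_dom_elim hd
    constructor
    · -- goodness condition (1): existential witnesses
      intro A R B hciAB hdA hdnE
      classical
      have hvA : v ∈ (I.interp L).cname A := rstr_cname_elim' hg hv hdA
      have hvE : v ∈ (I.interp L).sem (Concept.ex R (Concept.atom B)) :=
        (hmod _ hciAB).2 hvA
      obtain ⟨hvdom, e, hre, heB⟩ := hvE
      have heB' : e ∈ (I.interp L).cname B := heB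
      have hedom : e ∈ (I.interp L).dom := (I.interp L).cname_sub B heB'
      set V' : Finset α := insert v {e} with hV'def
      have hvV' : v ∈ V' := by simp [hV'def]
      have heV' : e ∈ V' := by simp [hV'def]
      have hV'sub : ↑V' ⊆ (I.interp L).dom := by
        intro x hx
        simp only [hV'def, Finset.coe_insert, Finset.coe_singleton,
          Set.mem_insert_iff, Set.mem_singleton_iff] at hx
        rcases hx with rfl | rfl
        · exact hvdom
        · exact hedom
      have hV'card : V'.card ≤ ontSize O := by
        have h2 : V'.card ≤ 2 :=
          le_trans (Finset.card_insert_le _ _) (by simp)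
        have hs : ∃ s, s ∈ O := by
          obtain ⟨s, hs, -⟩ := List.mem_flatMap.mp hL
          exact ⟨s, hs⟩
        obtain ⟨s, hs⟩ := hs
        exact le_trans h2 (two_le_ontSize hs)
      obtain ⟨g', hg'⟩ := exists_injOn_fin V' (ontSize O) hV'card ⟨v, hvV'⟩
      refine ⟨⟨L, rstr O (I.interp L) V' g'⟩,
        ih L hL V' hV'sub ⟨v, hvV'⟩ hV'card g' hg', rfl,
        g' e, rstr_dom_intro heV', ?_, ?_, ?_⟩
      · exact rstr_cname_intro (mem_ontCnames hciAB (by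
          simp [Stmt.cnames, Concept.cnames])) heV' heB'
      · intro S A' B' hci' hri' hd'A'
        have heA' : e ∈ (I.interp L).cname A' := rstr_cname_elim' hg' heV' hd'A'
        have hvS : (v, e) ∈ (I.interp L).role S := (hmod _ hri').2 hre
        have hvB' : v ∈ (I.interp L).cname B' :=
          (hmod _ hci').2 ⟨hvdom, e, hvS, heA'⟩
        exact rstr_cname_intro (mem_ontCnames hci' (by
          simp [Stmt.cnames, Concept.cnames])) hv hvB'
      · intro S A' B' hci' hri' hdA'
        have hvA' : v ∈ (I.interp L).cname A' := rstr_cname_elim' hg hv hdA'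
        have hef : (e, v) ∈ (I.interp L).role R.flip := role_flip_mem hre
        have heS : (e, v) ∈ (I.interp L).role S := (hmod _ hri').2 hef
        have heB2 : e ∈ (I.interp L).cname B' :=
          (hmod _ hci').2 ⟨hedom, v, heS, hvA'⟩
        exact rstr_cname_intro (mem_ontCnames hci' (by
          simp [Stmt.cnames, Concept.cnames])) heV' heB2
    · -- goodness condition (2): concept refinements
      rintro L' ⟨q₀, A₀, hq₀, hdA₀⟩
      have hvA₀ : v ∈ (I.interp L).cname A₀ := rstr_cname_elim' hg hv hdA₀
      obtain ⟨t₀, ht₀ans, hrho₀⟩ := (hmod _ hq₀).2 v hvA₀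
      obtain ⟨htne, htdom, -⟩ := hval.1.2.2.2.2.1 v L' t₀ hrho₀
      have hL' : L' ∈ ontLvls O := mem_ontLvls hq₀ (by simp [Stmt.lvls])
      have hV'sub : ↑t₀.toFinset ⊆ (I.interp L').dom := by
        intro x hx
        exact htdom x (List.mem_toFinset.mp hx)
      have hV'ne : t₀.toFinset.Nonempty := by
        obtain ⟨x, hx⟩ := List.exists_mem_of_ne_nil t₀ htne
        exact ⟨x, List.mem_toFinset.mpr hx⟩
      have hlen : t₀.length ≤ ontSize O := by
        obtain ⟨h₀, -, hteq⟩ := ht₀ans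
        rw [hteq, List.length_map]
        exact ans_length_le hq₀
      have hV'card : t₀.toFinset.card ≤ ontSize O :=
        le_trans t₀.toFinset_card_le hlen
      obtain ⟨g', hg'⟩ := exists_injOn_fin t₀.toFinset (ontSize O) hV'card hV'ne
      refine ⟨⟨L', rstr O (I.interp L') t₀.toFinset g'⟩,
        ih L' hL' t₀.toFinset hV'sub hV'ne hV'card g' hg', rfl, t₀.map g', ?_⟩
      intro q A hq hdA
      have hvA : v ∈ (I.interp L).cname A := rstr_cname_elim' hg hv hdA
      obtain ⟨t₁, ht₁ans, hrho₁⟩ := (hmod _ hq).2 v hvA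
      have ht10 : t₀ = t₁ := by
        rw [hrho₀] at hrho₁
        exact Option.some.inj hrho₁
      subst ht10
      obtain ⟨h, hhom, hteq⟩ := ht₁ans
      have hnfq := hnf.1 _ hq
      have hfull : q.Full := hnfq.1
      have hcasA : ∀ p ∈ q.cas, ∃ B, p.1 = Concept.atom B := hnfq.2.2
      have hmemV' : ∀ x ∈ q.ans, h x ∈ t₀.toFinset := by
        intro x hx
        rw [List.mem_toFinset, hteq]
        exact List.mem_map_of_mem (f := h) hx
      refine ⟨g' ∘ h, ⟨?_, ?_, ?_⟩, by rw [hteq, List.map_map]⟩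
      · intro x hx
        exact rstr_dom_intro (hmemV' x (full_vars_mem_ans hfull hx))
      · intro p hp
        obtain ⟨B, hB⟩ := hcasA p hp
        have hp2 : h p.2 ∈ (I.interp L').cname B := by
          have := hhom.2.1 p hp
          rwa [hB] at this
        have hp2ans : p.2 ∈ q.ans := by
          apply hfull.1
          exact List.mem_append.mpr (Or.inl (List.mem_map_of_mem (f := Prod.snd) hp))
        have hBcn : B ∈ ontCnames O := by
          refine mem_ontCnames hq ?_
          simp only [Stmt.cnames, List.mem_append]
          refine Or.inl (List.mem_flatMap.mpr ⟨p, hp, ?_⟩)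
          rw [hB]; simp [Concept.cnames]
        rw [hB]
        exact rstr_cname_intro hBcn (hmemV' p.2 hp2ans) hp2
      · intro p hp
        have hras := hhom.2.2 p hp
        have h1ans : p.2.1 ∈ q.ans := by
          apply hfull.1
          refine List.mem_append.mpr (Or.inr ?_)
          exact List.mem_flatMap.mpr ⟨p, hp, by simp⟩
        have h2ans : p.2.2 ∈ q.ans := by
          apply hfull.1
          refine List.mem_append.mpr (Or.inr ?_)
          exact List.mem_flatMap.mpr ⟨p, hp, by simp⟩
        have hrn : p.1 ∈ ontRnames O := by
          refine mem_ontRnames hq ?_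
          simp only [Stmt.rnames, List.mem_append]
          refine Or.inl (List.mem_append.mpr (Or.inr ?_))
          exact List.mem_map_of_mem (f := Prod.fst) hp
        exact rstr_rname_intro hrn (hmemV' _ h1ans) (hmemV' _ h2ans) hras

end RestrictionAux

/-- Let `O` be an `ALCHI^abs[cr]`-ontology in normal form
whose level graph is a tree, and let `I` be a model of `O`.  For every level
`L` of `O` and every set `V ⊆ Δ^{I_L}` with `|V| ≤ ‖O‖`, the restriction
`M_V = (L, I_L|_V)` of `I_L` to `V` (intersecting the extensions of all
concept and role names of `O` with `V`, after an injective renaming `g` of the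
elements of `V` into the fixed mosaic domain `Δ`) is a mosaic, and `M_V`
belongs to every set `M_i` of the mosaic-elimination sequence; in particular
`M_V ∈ M*`.  (Since interpretations have nonempty domains, `V` is required to
be nonempty.) -/
theorem restriction_mosaic_survives_elimination
    (O : List Stmt)
    (hnf : CRNormalForm O)
    (htree : IsTreeGraph {L | L ∈ ontLvls O} (fun L' L => precCR O L L'))
    (α : Type) (I : AInterp α) (hval : I.IsValid) (hmod : ∀ s ∈ O, I.sat s)
    (L : ℕ) (hL : L ∈ ontLvls O)
    (V : Finset α) (hV : ↑V ⊆ (I.interp L).dom) (hVne : V.Nonempty)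
    (hVcard : V.card ≤ ontSize O) :
    ∃ (M : MosaicCR O) (g : α → Fin (ontSize O)), Set.InjOn g ↑V ∧
      M.lvl = L ∧
      M.I.dom = g '' ↑V ∧
      (∀ A ∈ ontCnames O,
        M.I.cname A = g '' (↑V ∩ (I.interp L).cname A)) ∧
      (∀ A, A ∉ ontCnames O → M.I.cname A = ∅) ∧
      (∀ rn ∈ ontRnames O,
        M.I.rname rn = (fun p : α × α => (g p.1, g p.2)) ''
          {p | p.1 ∈ V ∧ p.2 ∈ V ∧ p ∈ (I.interp L).rname rn}) ∧
      (∀ rn, rn ∉ ontRnames O → M.I.rname rn = ∅) ∧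
      IsMosaicCR O M ∧ (∀ i, M ∈ MsetCR O i) ∧ M ∈ MstarCR O := by
  obtain ⟨g, hg⟩ := exists_injOn_fin V (ontSize O) hVcard hVne
  refine ⟨⟨L, rstr O (I.interp L) V g⟩, g, hg, rfl, rfl, ?_, ?_, ?_, ?_, ?_, ?_, ?_⟩
  · intro A hA
    show (if A ∈ ontCnames O then _ else ∅) = _
    rw [if_pos hA]
  · intro A hA
    show (if A ∈ ontCnames O then _ else ∅) = ∅
    rw [if_neg hA]
  · intro rn hrn
    show (if rn ∈ ontRnames O then _ else ∅) = _
    rw [if_pos hrn]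
  · intro rn hrn
    show (if rn ∈ ontRnames O then _ else ∅) = ∅
    rw [if_neg hrn]
  · exact isMosaic_rstr O hnf (I.interp L) (fun C D h => (hmod _ h).2)
      (fun R S h => (hmod _ h).2) hL V hV hVne g hg
  · exact fun i => rstr_mem_Mset O hnf I hval hmod i L hL V hV hVne hVcard g hg
  · exact Set.mem_iInter.mpr fun i =>
      rstr_mem_Mset O hnf I hval hmod i L hL V hV hVne hVcard g hg

end DLAbs
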